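/- Let F be a CDF on [0, v̄] with revenue function R(v) = v·(1-F(v)) and optimal posted price p* ∈ argmax R. For any ε > 0, there exist positive constants C and ε₀ such that for all ε ∈ (0, ε₀], sup over ε-IC and IR mechanisms of expected revenue minus R(p*) is at most C·√ε. -/

import Mathlib

/-!
Let `u w = sup_{v'} (w * x v' - t v')` be the buyer's indirect utility: it is convex,
nondecreasing and 1-Lipschitz, and ε-IC says that the utility `v * x v - t v` a buyer actually
gets is within `ε` of `u v`. The deviation of type `v` to the report of type `v + δ` gives
`δ * x v ≤ u (v + δ) - u v + ε`, so `t v` is controlled by the increments of `u` on the grid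
`δ ℕ`. Summation by parts turns that control into a combination of posted-price payments whose
weights are the second differences of `u` on the grid; these are nonnegative by convexity and sum
to at most `δ` by the Lipschitz bound. Each posted price earns at most `R p* + 2 δ`, hence
`E[t] ≤ R p* + 3 δ + ε + v̄ ε / δ`, and `δ = √ε` gives the bound `(v̄ + 4) √ε` for `ε ≤ 1`.
-/

open MeasureTheory Set Finset

lemma ConvexOn.add_sub_le_add_sub {f : ℝ → ℝ} (hf : ConvexOn ℝ univ f) {a b c : ℝ}
    (hab : a ≤ b) (hc : 0 ≤ c) : f (a + c) - f a ≤ f (b + c) - f b := by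
  rcases hc.eq_or_lt with rfl | hc
  · simp
  rcases hab.eq_or_lt with rfl | hab
  · rfl
  suffices (f (a + c) - f a) / c ≤ (f (b + c) - f b) / c by
    rwa [div_le_div_iff_of_pos_right hc] at this
  calc (f (a + c) - f a) / c = (f (a + c) - f a) / (a + c - a) := by rw [add_sub_cancel_left]
    _ ≤ (f (b + c) - f a) / (b + c - a) :=
        hf.secant_mono (mem_univ a) (mem_univ _) (mem_univ _) (by linarith) (by linarith)
          (by linarith)
    _ = (f a - f (b + c)) / (a - (b + c)) := by rw [← neg_div_neg_eq, neg_sub, neg_sub]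
    _ ≤ (f b - f (b + c)) / (b - (b + c)) :=
        hf.secant_mono (mem_univ _) (mem_univ a) (mem_univ b) (by linarith) (by linarith) hab.le
    _ = (f (b + c) - f b) / c := by rw [← neg_div_neg_eq, neg_sub, neg_sub, add_sub_cancel_left]

lemma mul_sub_sum_range_eq {R : Type*} [CommRing R] (d : ℕ → R) (n : ℕ) :
    n * d n - ∑ j ∈ range n, d j = ∑ i ∈ range n, (i + 1) * (d (i + 1) - d i) := by
  induction n with
  | zero => simp
  | succ n ih => rw [sum_range_succ, sum_range_succ, ← ih]; push_cast; ring

def gridIncrement (f : ℝ → ℝ) (δ : ℝ) (j : ℕ) : ℝ := f (δ * (j + 1)) - f (δ * j)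

section Grid

variable {f : ℝ → ℝ} {δ : ℝ}

lemma gridIncrement_le (hf : ∀ a, f (a + δ) ≤ f a + δ) (j : ℕ) :
    gridIncrement f δ j ≤ δ := by
  have := hf (δ * j)
  rw [← mul_add_one] at this
  unfold gridIncrement
  linarith

lemma gridIncrement_nonneg (hf : Monotone f) (hδ : 0 ≤ δ) (j : ℕ) :
    0 ≤ gridIncrement f δ j :=
  sub_nonneg.2 (hf (by gcongr; linarith))

lemma monotone_gridIncrement (hf : ConvexOn ℝ univ f) (hδ : 0 ≤ δ) :
    Monotone (gridIncrement f δ) := by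
  refine monotone_nat_of_le_succ fun j => ?_
  have := hf.add_sub_le_add_sub (a := δ * j) (b := δ * (j + 1)) (by gcongr; linarith) hδ
  simp only [gridIncrement, Nat.cast_succ, mul_add_one] at this ⊢
  exact this

lemma sum_gridIncrement (f : ℝ → ℝ) (δ : ℝ) (k : ℕ) :
    ∑ j ∈ range k, gridIncrement f δ j = f (δ * k) - f 0 := by
  simpa [gridIncrement] using sum_range_sub (fun j : ℕ => f (δ * j)) k

lemma mul_increment_sub_le_sum (hf : ConvexOn ℝ univ f) (hmono : Monotone f) (hf0 : 0 ≤ f 0)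
    (hδ : 0 ≤ δ) {v : ℝ} {k : ℕ} (hk : δ * k ≤ v) (hk' : v ≤ δ * (k + 1)) :
    v * (f (v + δ) - f v) - δ * f v ≤
      δ * (∑ i ∈ range (k + 1), (i + 1) * (gridIncrement f δ (i + 1) - gridIncrement f δ i)
        + gridIncrement f δ k) := by
  have hinc : f (v + δ) - f v ≤ gridIncrement f δ (k + 1) := by
    have := hf.add_sub_le_add_sub hk' hδ
    simp only [gridIncrement, Nat.cast_succ, mul_add_one] at this ⊢
    exact this
  have hinc_nonneg : 0 ≤ f (v + δ) - f v := sub_nonneg.2 (hmono (by linarith))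
  have habel := mul_sub_sum_range_eq (gridIncrement f δ) (k + 1)
  rw [sum_range_succ, sum_gridIncrement] at habel
  push_cast at habel
  rw [← habel]
  nlinarith [mul_le_mul_of_nonneg_right hk' hinc_nonneg,
    mul_le_mul_of_nonneg_left hinc (by positivity : 0 ≤ δ * (k + 1)),
    mul_le_mul_of_nonneg_left (hmono hk) hδ, mul_nonneg hδ hf0]

noncomputable def gridPaymentBound (f : ℝ → ℝ) (δ : ℝ) (M : ℕ) (v : ℝ) : ℝ :=
  ∑ i ∈ range M, (Ioi (δ * ((i : ℝ) - 1))).indicator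
    (fun _ => (i + 1) * (gridIncrement f δ (i + 1) - gridIncrement f δ i)) v

lemma sum_le_gridPaymentBound (hf : ConvexOn ℝ univ f) (hδ : 0 < δ) {v : ℝ} {k M : ℕ}
    (hk : δ * k ≤ v) (hkM : k + 1 ≤ M) :
    ∑ i ∈ range (k + 1), (i + 1) * (gridIncrement f δ (i + 1) - gridIncrement f δ i) ≤
      gridPaymentBound f δ M v := by
  have hterm_nonneg :
      ∀ i : ℕ, 0 ≤ (i + 1) * (gridIncrement f δ (i + 1) - gridIncrement f δ i) :=
    fun i => mul_nonneg (by positivity)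
      (sub_nonneg.2 (monotone_gridIncrement hf hδ.le i.le_succ))
  calc _ = ∑ i ∈ range (k + 1), (Ioi (δ * ((i : ℝ) - 1))).indicator
          (fun _ => (i + 1) * (gridIncrement f δ (i + 1) - gridIncrement f δ i)) v := by
        refine sum_congr rfl fun i hi => ?_
        have hik : (i : ℝ) ≤ k := by exact_mod_cast Nat.lt_succ_iff.1 (mem_range.1 hi)
        rw [indicator_of_mem (Set.mem_Ioi.2 (by nlinarith))]
    _ ≤ gridPaymentBound f δ M v :=
        sum_le_sum_of_subset_of_nonneg (range_subset_range.2 hkM)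
          fun i _ _ => indicator_nonneg (fun _ _ => hterm_nonneg i) _

lemma integral_gridPaymentBound_le (hf : ConvexOn ℝ univ f) (hmono : Monotone f)
    (hlip : ∀ a, f (a + δ) ≤ f a + δ) (hδ : 0 < δ) (M : ℕ) {P : Measure ℝ}
    [IsProbabilityMeasure P] {A : ℝ} (hA : ∀ s, (s + 2 * δ) * P.real (Ioi s) ≤ A) :
    ∫ v, gridPaymentBound f δ M v ∂P ≤ A := by
  set E : ℕ → ℝ := fun i => gridIncrement f δ (i + 1) - gridIncrement f δ i
  have hE : ∀ i, 0 ≤ E i := fun i => sub_nonneg.2 (monotone_gridIncrement hf hδ.le i.le_succ)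
  have hEsum : ∑ i ∈ range M, E i ≤ δ := by
    rw [sum_range_sub]
    linarith [gridIncrement_le hlip M, gridIncrement_nonneg hmono hδ.le 0]
  have hA0 : 0 ≤ A := (by positivity : 0 ≤ (0 + 2 * δ) * P.real (Ioi 0)).trans (hA 0)
  have hterm (i : ℕ) : P.real (Ioi (δ * ((i : ℝ) - 1))) * ((i + 1) * E i) ≤ E i / δ * A := by
    set p := δ * ((i : ℝ) - 1)
    calc P.real (Ioi p) * ((i + 1) * E i) = E i / δ * ((p + 2 * δ) * P.real (Ioi p)) := by
          simp only [p]; field_simp; ring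
      _ ≤ E i / δ * A := mul_le_mul_of_nonneg_left (hA p) (div_nonneg (hE i) hδ.le)
  calc ∫ v, gridPaymentBound f δ M v ∂P
      = ∑ i ∈ range M, P.real (Ioi (δ * ((i : ℝ) - 1))) * ((i + 1) * E i) := by
        unfold gridPaymentBound
        rw [integral_finsetSum _ fun i _ => (integrable_const _).indicator measurableSet_Ioi]
        simp only [integral_indicator_const _ measurableSet_Ioi, smul_eq_mul, E]
    _ ≤ ∑ i ∈ range M, E i / δ * A := sum_le_sum fun i _ => hterm i
    _ = (∑ i ∈ range M, E i) / δ * A := by rw [← sum_mul, sum_div]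
    _ ≤ A := mul_le_of_le_one_left hA0 ((div_le_one hδ).2 hEsum)

end Grid

lemma add_mul_measureReal_Ioi_le {P : Measure ℝ} [IsProbabilityMeasure P] {vbar Rstar : ℝ}
    (hsupp : P (Icc 0 vbar) = 1) (hrev : ∀ s ∈ Icc 0 vbar, s * P.real (Ioi s) ≤ Rstar)
    (hR0 : 0 ≤ Rstar) (s : ℝ) {a : ℝ} (ha : 0 ≤ a) :
    (s + a) * P.real (Ioi s) ≤ Rstar + a := by
  have hprice : s * P.real (Ioi s) ≤ Rstar := by
    rcases lt_or_ge s 0 with hs | hs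
    · exact (mul_nonpos_of_nonpos_of_nonneg hs.le measureReal_nonneg).trans hR0
    rcases le_or_gt s vbar with hsv | hsv
    · exact hrev s ⟨hs, hsv⟩
    have hsub : Ioi s ⊆ (Icc 0 vbar)ᶜ := fun v hv hv' =>
      (hv'.2.trans_lt hsv).not_ge (le_of_lt hv)
    have hnull := measure_mono_null hsub ((prob_compl_eq_zero_iff measurableSet_Icc).2 hsupp)
    simpa [Measure.real, hnull] using hR0
  linarith [mul_le_of_le_one_right ha (measureReal_le_one (μ := P) (s := Ioi s))]

structure IsApproxICMechanism (vbar ε : ℝ) (x t : ℝ → ℝ) : Prop where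
  alloc_mem : ∀ v ∈ Icc 0 vbar, x v ∈ Icc (0 : ℝ) 1
  ir : ∀ v ∈ Icc 0 vbar, 0 ≤ v * x v - t v
  ic : ∀ v ∈ Icc 0 vbar, ∀ v' ∈ Icc 0 vbar, v * x v' - t v' - ε ≤ v * x v - t v

noncomputable def indirectUtility (vbar : ℝ) (x t : ℝ → ℝ) (w : ℝ) : ℝ :=
  ⨆ v : Icc 0 vbar, w * x v - t v

namespace IsApproxICMechanism

variable {vbar ε : ℝ} {x t : ℝ → ℝ}

lemma bddAbove_range (h : IsApproxICMechanism vbar ε x t) (hvbar : 0 ≤ vbar) (w : ℝ) :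
    BddAbove (range fun v : Icc 0 vbar => w * x v - t v) := by
  refine ⟨|w| + ε - t 0, ?_⟩
  rintro _ ⟨⟨v, hv⟩, rfl⟩
  have hx := h.alloc_mem v hv
  have hwx : w * x v ≤ |w| :=
    (mul_le_mul_of_nonneg_right (le_abs_self w) hx.1).trans
      (mul_le_of_le_one_right (abs_nonneg w) hx.2)
  linarith [h.ic 0 ⟨le_rfl, hvbar⟩ v hv]

lemma le_indirectUtility (h : IsApproxICMechanism vbar ε x t) (hvbar : 0 ≤ vbar) (w : ℝ)
    {v : ℝ} (hv : v ∈ Icc 0 vbar) : w * x v - t v ≤ indirectUtility vbar x t w :=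
  le_ciSup (h.bddAbove_range hvbar w) ⟨v, hv⟩

lemma indirectUtility_le (h : IsApproxICMechanism vbar ε x t) {v : ℝ} (hv : v ∈ Icc 0 vbar) :
    indirectUtility vbar x t v ≤ v * x v - t v + ε :=
  have : Nonempty (Icc 0 vbar) := ⟨⟨v, hv⟩⟩
  ciSup_le fun v' => by linarith [h.ic v hv v' v'.2]

lemma indirectUtility_zero_nonneg (h : IsApproxICMechanism vbar ε x t) (hvbar : 0 ≤ vbar) :
    0 ≤ indirectUtility vbar x t 0 :=
  (h.ir 0 ⟨le_rfl, hvbar⟩).trans (h.le_indirectUtility hvbar 0 ⟨le_rfl, hvbar⟩)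

lemma monotone_indirectUtility (h : IsApproxICMechanism vbar ε x t) (hvbar : 0 ≤ vbar) :
    Monotone (indirectUtility vbar x t) := fun a b hab =>
  ciSup_mono (h.bddAbove_range hvbar b) fun v => by
    nlinarith [(h.alloc_mem v v.2).1]

lemma indirectUtility_add_le (h : IsApproxICMechanism vbar ε x t) (hvbar : 0 ≤ vbar) (a : ℝ)
    {c : ℝ} (hc : 0 ≤ c) :
    indirectUtility vbar x t (a + c) ≤ indirectUtility vbar x t a + c :=
  have : Nonempty (Icc 0 vbar) := ⟨⟨0, le_rfl, hvbar⟩⟩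
  ciSup_le fun v => by
    nlinarith [(h.alloc_mem v v.2).2, h.le_indirectUtility hvbar a v.2]

lemma convexOn_indirectUtility (h : IsApproxICMechanism vbar ε x t) (hvbar : 0 ≤ vbar) :
    ConvexOn ℝ univ (indirectUtility vbar x t) := by
  refine ⟨convex_univ, fun a _ b _ μ ν hμ hν hμν => ?_⟩
  have : Nonempty (Icc 0 vbar) := ⟨⟨0, le_rfl, hvbar⟩⟩
  refine ciSup_le fun v => ?_
  have ha := mul_le_mul_of_nonneg_left (h.le_indirectUtility hvbar a v.2) hμ
  have hb := mul_le_mul_of_nonneg_left (h.le_indirectUtility hvbar b v.2) hν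
  simp only [smul_eq_mul]
  linear_combination ha + hb + t v * hμν

lemma mul_payment_le (h : IsApproxICMechanism vbar ε x t) (hvbar : 0 ≤ vbar) {δ v : ℝ}
    (hδ : 0 < δ) (hv : v ∈ Icc 0 vbar) :
    δ * t v ≤ v * (indirectUtility vbar x t (v + δ) - indirectUtility vbar x t v)
      - δ * indirectUtility vbar x t v + (v + δ) * ε := by
  have hdev := h.le_indirectUtility hvbar (v + δ) hv
  have hU := h.indirectUtility_le hv
  have hx : δ * x v ≤ indirectUtility vbar x t (v + δ) - indirectUtility vbar x t v + ε := by
    linarith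
  nlinarith [mul_le_mul_of_nonneg_left hx hv.1, mul_le_mul_of_nonneg_left hU hδ.le]

lemma payment_le_gridPaymentBound (h : IsApproxICMechanism vbar ε x t) (hvbar : 0 ≤ vbar)
    (hε : 0 ≤ ε) {δ : ℝ} (hδ : 0 < δ) {M : ℕ} (hM : vbar < δ * M) {v : ℝ}
    (hv : v ∈ Icc 0 vbar) :
    t v ≤ gridPaymentBound (indirectUtility vbar x t) δ M v + δ + ε + vbar * ε / δ := by
  set f := indirectUtility vbar x t
  set k := ⌊v / δ⌋₊
  have hk : δ * k ≤ v := by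
    rw [mul_comm, ← le_div_iff₀ hδ]
    exact Nat.floor_le (div_nonneg hv.1 hδ.le)
  have hk' : v ≤ δ * (k + 1) := by
    rw [mul_comm, ← div_le_iff₀ hδ]
    exact (Nat.lt_floor_add_one _).le
  have hkM : k + 1 ≤ M := by
    have : (k : ℝ) < M := by
      rw [← mul_lt_mul_iff_of_pos_left hδ]
      linarith [hv.2]
    exact_mod_cast this
  have hgrid := mul_increment_sub_le_sum (h.convexOn_indirectUtility hvbar)
    (h.monotone_indirectUtility hvbar) (h.indirectUtility_zero_nonneg hvbar) hδ.le hk hk'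
  have hbound := sum_le_gridPaymentBound (h.convexOn_indirectUtility hvbar) hδ hk hkM
  have hinc := gridIncrement_le (fun a => h.indirectUtility_add_le hvbar a hδ.le) k
  have hpay := h.mul_payment_le hvbar hδ hv
  have hvε : v * ε ≤ vbar * ε := mul_le_mul_of_nonneg_right hv.2 hε
  rw [← mul_le_mul_iff_of_pos_left hδ]
  calc δ * t v ≤ δ * (gridPaymentBound f δ M v + δ) + (v + δ) * ε := by nlinarith
    _ ≤ δ * (gridPaymentBound f δ M v + δ + ε + vbar * ε / δ) := by
        field_simp
        nlinarith

theorem integral_payment_le (h : IsApproxICMechanism vbar ε x t) (hvbar : 0 ≤ vbar)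
    (hε : 0 ≤ ε) {P : Measure ℝ} [IsProbabilityMeasure P] (hsupp : P (Icc 0 vbar) = 1)
    (ht : Integrable t P) {δ A : ℝ} (hδ : 0 < δ)
    (hA : ∀ s, (s + 2 * δ) * P.real (Ioi s) ≤ A) :
    ∫ v, t v ∂P ≤ A + δ + ε + vbar * ε / δ := by
  obtain ⟨M, hM⟩ := exists_nat_gt (vbar / δ)
  rw [div_lt_iff₀ hδ, mul_comm] at hM
  set f := indirectUtility vbar x t
  have hsupp_ae : ∀ᵐ v ∂P, v ∈ Icc 0 vbar :=
    mem_ae_iff.2 ((prob_compl_eq_zero_iff measurableSet_Icc).2 hsupp)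
  have hint : Integrable (gridPaymentBound f δ M) P :=
    integrable_finsetSum _ fun i _ => (integrable_const _).indicator measurableSet_Ioi
  calc ∫ v, t v ∂P ≤ ∫ v, gridPaymentBound f δ M v + (δ + ε + vbar * ε / δ) ∂P := by
        refine integral_mono_ae ht (hint.add (integrable_const _)) ?_
        filter_upwards [hsupp_ae] with v hv
        have := h.payment_le_gridPaymentBound hvbar hε hδ hM hv
        linarith
    _ = ∫ v, gridPaymentBound f δ M v ∂P + (δ + ε + vbar * ε / δ) := by
        rw [integral_add hint (integrable_const _), integral_const, probReal_univ, one_smul]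
    _ ≤ A + δ + ε + vbar * ε / δ := by
        have := integral_gridPaymentBound_le (h.convexOn_indirectUtility hvbar)
          (h.monotone_indirectUtility hvbar) (fun a => h.indirectUtility_add_le hvbar a hδ.le)
          hδ M hA
        linarith

end IsApproxICMechanism

/-- The revenue gain of any IR, ε-IC mechanism over the optimal posted-price
revenue `R(p*)` is at most `C·√ε` for all sufficiently small `ε`. -/
theorem sqrt_eps_upper_bound
    (vbar : ℝ) (P : Measure ℝ) [IsProbabilityMeasure P]
    (hsupp : P (Set.Icc 0 vbar) = 1)
    (F : ℝ → ℝ) (hF : ∀ v, F v = (P (Set.Iic v)).toReal)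
    (R : ℝ → ℝ) (hR : ∀ v, R v = v * (1 - F v))
    (pstar : ℝ) (hpstar : pstar ∈ Set.Icc 0 vbar)
    (hmax : ∀ v ∈ Set.Icc 0 vbar, R v ≤ R pstar) :
    ∃ C > 0, ∃ ε₀ > 0, ∀ ε ∈ Set.Ioc (0:ℝ) ε₀,
      ∀ x t : ℝ → ℝ,
        (∀ v ∈ Set.Icc 0 vbar, x v ∈ Set.Icc (0:ℝ) 1) →
        (∀ v ∈ Set.Icc 0 vbar, 0 ≤ v * x v - t v) →
        (∀ v ∈ Set.Icc 0 vbar, ∀ v' ∈ Set.Icc 0 vbar,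
          v * x v' - t v' - ε ≤ v * x v - t v) →
        Integrable t P →
        (∫ v, t v ∂P) - R pstar ≤ C * Real.sqrt ε := by
  have hvbar : 0 ≤ vbar := hpstar.1.trans hpstar.2
  have hR0 : 0 ≤ R pstar := by simpa [hR] using hmax 0 ⟨le_rfl, hvbar⟩
  have hrev : ∀ s ∈ Icc 0 vbar, s * P.real (Ioi s) ≤ R pstar := fun s hs => by
    rw [← compl_Iic, probReal_compl_eq_one_sub measurableSet_Iic, measureReal_def, ← hF, ← hR]
    exact hmax s hs
  refine ⟨vbar + 4, by linarith, 1, one_pos, fun ε ⟨hε0, hε1⟩ x t hx hIR hIC ht => ?_⟩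
  have hδ : 0 < √ε := Real.sqrt_pos.2 hε0
  have hεδ : ε ≤ √ε := (Real.le_sqrt hε0.le hε0.le).2 (by nlinarith)
  have key := IsApproxICMechanism.integral_payment_le ⟨hx, hIR, hIC⟩ hvbar hε0.le hsupp ht hδ
    fun s => add_mul_measureReal_Ioi_le hsupp hrev hR0 s (by positivity)
  rw [mul_div_assoc, Real.div_sqrt] at key
  nlinarith
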